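/- arXiv:1312.6875 — 3 statements merged into one kernel-verified Lean document; each statement's English description precedes it below -/
import Mathlib

section
/- Let W be a discrete memoryless channel with R_cr < C and let R ∈ (R_cr, C). If W is a positive channel, i.e., W(y|x) > 0 for all (x,y) ∈ 𝒳×𝒴, then for every Q ∈ P(𝒳) with E_r(R,Q) = E_r(R), the pair (Q,W) is nonsingular. -/
open Real BigOperators
open scoped Classical

namespace RCB

/-- A probability distribution on a finite alphabet. -/
def IsDist {α : Type*} [Fintype α] (Q : α → ℝ) : Prop :=
  (∀ a, 0 ≤ Q a) ∧ ∑ a, Q a = 1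

/-- A discrete memoryless channel, i.e. a stochastic matrix from `X` to `Y`. -/
def IsChannel {X Y : Type*} [Fintype X] [Fintype Y] (W : X → Y → ℝ) : Prop :=
  (∀ x y, 0 ≤ W x y) ∧ ∀ x, ∑ y, W x y = 1

/-- The Gallager function `E_o(ρ, Q)`. -/
noncomputable def Eo {X Y : Type*} [Fintype X] [Fintype Y]
    (W : X → Y → ℝ) (ρ : ℝ) (Q : X → ℝ) : ℝ :=
  - Real.log (∑ y, (∑ x, Q x * W x y ^ (1 / (1 + ρ))) ^ (1 + ρ))

/-- The random coding exponent `E_r(R, Q)` for input distribution `Q`. -/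
noncomputable def ErQ {X Y : Type*} [Fintype X] [Fintype Y]
    (W : X → Y → ℝ) (R : ℝ) (Q : X → ℝ) : ℝ :=
  sSup ((fun ρ => -ρ * R + Eo W ρ Q) '' Set.Icc (0 : ℝ) 1)

/-- The random coding exponent `E_r(R)`. -/
noncomputable def Er {X Y : Type*} [Fintype X] [Fintype Y]
    (W : X → Y → ℝ) (R : ℝ) : ℝ :=
  sSup {v : ℝ | ∃ Q : X → ℝ, IsDist Q ∧ v = ErQ W R Q}

/-- The mutual information `I(Q; W)` (natural logarithm). -/
noncomputable def MI {X Y : Type*} [Fintype X] [Fintype Y]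
    (W : X → Y → ℝ) (Q : X → ℝ) : ℝ :=
  ∑ x, ∑ y, Q x * W x y * Real.log (W x y / ∑ x', Q x' * W x' y)

/-- The capacity `C = max_Q I(Q;W)`. -/
noncomputable def Capacity {X Y : Type*} [Fintype X] [Fintype Y]
    (W : X → Y → ℝ) : ℝ :=
  sSup {v : ℝ | ∃ Q : X → ℝ, IsDist Q ∧ v = MI W Q}

/-- The critical rate of the input distribution `Q`:
`R_cr(Q) = ∂E_o(ρ,Q)/∂ρ |_{ρ=1}`. -/
noncomputable def RcrQ {X Y : Type*} [Fintype X] [Fintype Y]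
    (W : X → Y → ℝ) (Q : X → ℝ) : ℝ :=
  deriv (fun ρ => Eo W ρ Q) 1

/-- The critical rate of the channel: the largest `R` with
`E_r(R) = -R + max_Q E_o(1,Q)`. -/
noncomputable def Rcr {X Y : Type*} [Fintype X] [Fintype Y]
    (W : X → Y → ℝ) : ℝ :=
  sSup {R : ℝ | Er W R = -R + sSup {v : ℝ | ∃ Q : X → ℝ, IsDist Q ∧ v = Eo W 1 Q}}

/-- The rate `R_∞ = inf {R ≥ 0 : E_SP(R) < ∞}` (finiteness of the
sphere-packing exponent expressed as boundedness of the family of affine maps). -/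
noncomputable def Rinf {X Y : Type*} [Fintype X] [Fintype Y]
    (W : X → Y → ℝ) : ℝ :=
  sInf {R : ℝ | 0 ≤ R ∧
    BddAbove {v : ℝ | ∃ (Q : X → ℝ) (ρ : ℝ), IsDist Q ∧ 0 ≤ ρ ∧ v = -ρ * R + Eo W ρ Q}}

/-- The pair `(Q, W)` is singular if `W(y|x) = W(y|z)` whenever
`Q(x)W(y|x)Q(z)W(y|z) > 0`. -/
def Singular {X Y : Type*} (W : X → Y → ℝ) (Q : X → ℝ) : Prop :=
  ∀ x y z, 0 < Q x * W x y * (Q z * W z y) → W x y = W z y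

/-- `ρ^*_R(Q) = -∂E_r(a,Q)/∂a |_{a=R}`. -/
noncomputable def rhoStarQ {X Y : Type*} [Fintype X] [Fintype Y]
    (W : X → Y → ℝ) (Q : X → ℝ) (R : ℝ) : ℝ :=
  - deriv (fun a => ErQ W a Q) R

/-- The number of messages of an `(N, R)` code: `⌈exp (N R)⌉`. -/
noncomputable def nMsgs (N : ℕ) (R : ℝ) : ℕ := ⌈Real.exp (N * R)⌉₊

/-- The `N`-fold memoryless extension of the channel `W`. -/
noncomputable def Wn {X Y : Type*} (W : X → Y → ℝ) {N : ℕ}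
    (c : Fin N → X) (y : Fin N → Y) : ℝ :=
  ∏ n, W (c n) (y n)

/-- The maximal error probability of the code `(f, φ)` over the `N`-fold
memoryless extension of `W`. -/
noncomputable def Pmax {X Y : Type*} [Fintype X] [Fintype Y] {M N : ℕ}
    (W : X → Y → ℝ) (f : Fin M → Fin N → X) (φ : (Fin N → Y) → Fin M) : ℝ :=
  ⨆ m : Fin M, ∑ y : Fin N → Y, Wn W (f m) y * (if φ y ≠ m then (1 : ℝ) else 0)

/-- The ensemble average error probability `P̄_e(Q, N, R)`: the `⌈exp (N R)⌉`
codewords are drawn i.i.d. from `Q^N` and decoded by maximum-likelihood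
decoding, ties counted as errors. -/
noncomputable def Pbar {X Y : Type*} [Fintype X] [Fintype Y]
    (W : X → Y → ℝ) (Q : X → ℝ) (N : ℕ) (R : ℝ) : ℝ :=
  ∑ c : Fin (nMsgs N R) → Fin N → X,
    (∏ m, ∏ n, Q (c m n)) *
      ((nMsgs N R : ℝ)⁻¹ *
        ∑ m, ∑ y : Fin N → Y,
          Wn W (c m) y *
            (if ∃ m', m' ≠ m ∧ Wn W (c m) y ≤ Wn W (c m') y then (1 : ℝ) else 0))

/-- The tilted output distribution `f_ρ`. -/
noncomputable def fRho {X Y : Type*} [Fintype X] [Fintype Y]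
    (W : X → Y → ℝ) (Q : X → ℝ) (ρ : ℝ) (y : Y) : ℝ :=
  (∑ x, Q x * W x y ^ (1 / (1 + ρ))) ^ (1 + ρ) /
    ∑ b, (∑ a, Q a * W a b ^ (1 / (1 + ρ))) ^ (1 + ρ)

/-- The cumulant generating function
`Λ_ρ(λ) = log E_{P_{X,Y}}[exp(λ log (f_ρ(Y)/W(Y|X)))]` with `P_{X,Y} = Q × W`. -/
noncomputable def Lam {X Y : Type*} [Fintype X] [Fintype Y]
    (W : X → Y → ℝ) (Q : X → ℝ) (ρ : ℝ) (t : ℝ) : ℝ :=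
  Real.log (∑ x, ∑ y, Q x * W x y * Real.exp (t * Real.log (fRho W Q ρ y / W x y)))

/-- `P_{X,Y,Z}(S̃_Q)` where `P_{X,Y,Z}(x,y,z) = Q(x)W(y|x)Q(z)` and
`S̃_Q = {(x,y,z) : Q(x)W(y|x)Q(z)W(y|z) > 0}`. -/
noncomputable def PStilde {X Y : Type*} [Fintype X] [Fintype Y]
    (W : X → Y → ℝ) (Q : X → ℝ) : ℝ :=
  ∑ x, ∑ y, ∑ z,
    if 0 < Q x * W x y * (Q z * W z y) then Q x * W x y * Q z else 0

/-- The bivariate cumulant generating function `Λ_{1,ρ}(v)` with respect to the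
conditional distribution `P̃_{X,Y,Z}` of `P_{X,Y,Z}` given `S̃_Q`. -/
noncomputable def Lam1 {X Y : Type*} [Fintype X] [Fintype Y]
    (W : X → Y → ℝ) (Q : X → ℝ) (ρ : ℝ) (v : ℝ × ℝ) : ℝ :=
  Real.log ((∑ x, ∑ y, ∑ z,
    if 0 < Q x * W x y * (Q z * W z y) then
      Q x * W x y * Q z *
        Real.exp (v.1 * Real.log (W x y / fRho W Q ρ y) +
          v.2 * Real.log (W z y / W x y))
    else 0) / PStilde W Q)

/-- The subdifferential of `f : ℝ → ℝ` at `R` (for convex `f`). -/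
def Subderiv (f : ℝ → ℝ) (R : ℝ) : Set ℝ :=
  {g : ℝ | ∀ x, f R + g * (x - R) ≤ f x}

/-- The tilted backward channel `P^ρ_{X|Y}`. -/
noncomputable def PXgY {X Y : Type*} [Fintype X]
    (W : X → Y → ℝ) (Q : X → ℝ) (ρ : ℝ) (x : X) (y : Y) : ℝ :=
  Q x * W x y ^ (1 / (1 + ρ)) / ∑ a, Q a * W a y ^ (1 / (1 + ρ))

/-- The tilted joint distribution `P^ρ_{X,Y}(x,y) = P^ρ_{X|Y}(x|y) P^ρ_Y(y)`. -/
noncomputable def PXY {X Y : Type*} [Fintype X] [Fintype Y]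
    (W : X → Y → ℝ) (Q : X → ℝ) (ρ : ℝ) (x : X) (y : Y) : ℝ :=
  PXgY W Q ρ x y * fRho W Q ρ y

/-!
If `(Q, W)` is singular and `W` is positive, all rows of `W` indexed by the support of `Q` coincide,
so `E_o(ρ, Q) = 0` for every `ρ ≥ 0` and `E_r(R, Q) = max 0 (-R)`. On the other hand
`E_r(R) > 0` for `R < C`: some `Q₀` has `I(Q₀; W) > R`, and `I(Q₀; W)` is the slope of
`E_o(·, Q₀)` at `ρ = 0`. Hence an optimal singular `Q` forces `R < 0` and `E_r(R) = -R`.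
Then `-R + E_o(1, Q') ≤ E_r(R) = -R` for every `Q'`, and since `E_o(1, ·) ≥ 0` we get
`max_Q E_o(1, Q) = 0`, so `R` belongs to the set whose supremum is `R_cr`: `R ≤ R_cr`.
-/

open Set Filter Topology

section

variable {X Y : Type*} [Fintype X] {W : X → Y → ℝ} {Q : X → ℝ} {R : ℝ}

lemma IsDist.exists_pos (hQ : IsDist Q) : ∃ x, 0 < Q x := by
  by_contra! h
  have : ∑ x, Q x = 0 := Finset.sum_eq_zero fun x _ => le_antisymm (h x) (hQ.1 x)
  linarith [hQ.2]

lemma IsDist.sum_mul_pos (hQ : IsDist Q) (hpos : ∀ x y, 0 < W x y) (y : Y) :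
    0 < ∑ x, Q x * W x y := by
  obtain ⟨x₀, hx₀⟩ := hQ.exists_pos
  exact Finset.sum_pos' (fun x _ => mul_nonneg (hQ.1 x) (hpos x y).le)
    ⟨x₀, Finset.mem_univ _, mul_pos hx₀ (hpos x₀ y)⟩

lemma isDist_uniform [Nonempty X] : IsDist fun _ : X => (Fintype.card X : ℝ)⁻¹ :=
  ⟨fun _ => by positivity, by simp⟩

lemma hasDerivAt_rpow_one_div_one_add {a : ℝ} (ha : 0 < a) :
    HasDerivAt (fun ρ : ℝ => a ^ (1 / (1 + ρ))) (-(a * log a)) 0 := by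
  have hs : HasDerivAt (fun ρ : ℝ => 1 / (1 + ρ)) (-1) 0 := by
    simpa [one_div] using ((hasDerivAt_id (0 : ℝ)).const_add 1).fun_inv (by norm_num)
  convert (hasDerivAt_const (0 : ℝ) a).rpow hs ha using 1
  simp

lemma hasDerivAt_Eo_summand (hpos : ∀ x y, 0 < W x y) (hQ : IsDist Q) (y : Y) :
    HasDerivAt (fun ρ : ℝ => (∑ x, Q x * W x y ^ (1 / (1 + ρ))) ^ (1 + ρ))
      ((∑ x, Q x * W x y) * log (∑ x, Q x * W x y) - ∑ x, Q x * W x y * log (W x y)) 0 := by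
  have hinner : HasDerivAt (fun ρ : ℝ => ∑ x, Q x * W x y ^ (1 / (1 + ρ)))
      (-∑ x, Q x * W x y * log (W x y)) 0 := by
    refine (HasDerivAt.fun_sum fun x _ =>
      (hasDerivAt_rpow_one_div_one_add (hpos x y)).const_mul (Q x)).congr_deriv ?_
    simp [mul_assoc]
  have hq : ∑ x, Q x * W x y ^ (1 / (1 + (0 : ℝ))) = ∑ x, Q x * W x y := by simp
  refine (hinner.rpow ((hasDerivAt_id (0 : ℝ)).const_add 1)
    (by simpa [hq] using hQ.sum_mul_pos hpos y)).congr_deriv ?_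
  simp only [id_eq, add_zero, one_div_one, rpow_one, sub_self, rpow_zero, mul_one, one_mul]
  ring

variable [Fintype Y]

lemma IsChannel.sum_output (hW : IsChannel W) (hQ : IsDist Q) :
    ∑ y, ∑ x, Q x * W x y = 1 := by
  rw [Finset.sum_comm]
  simp_rw [← Finset.mul_sum, hW.2, mul_one]
  exact hQ.2

lemma Eo_zero (hW : IsChannel W) (hQ : IsDist Q) : Eo W 0 Q = 0 := by
  simp [Eo, hW.sum_output hQ]

lemma Eo_one_nonneg (hW : IsChannel W) (hQ : IsDist Q) : 0 ≤ Eo W 1 Q := by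
  have hsq : ∀ y, (∑ x, Q x * W x y ^ (1 / (1 + 1 : ℝ))) ^ (1 + 1 : ℝ) ≤ ∑ x, Q x * W x y := by
    intro y
    -- Cauchy–Schwarz with `(Q x √W)² = Q x · (Q x W)` and `∑ Q = 1`.
    have := Finset.sum_sq_le_sum_mul_sum_of_sq_le_mul Finset.univ
      (r := fun x => Q x * √(W x y)) (fun x _ => hQ.1 x)
      (fun x _ => mul_nonneg (hQ.1 x) (hW.1 x y))
      (fun x _ => by rw [mul_pow, Real.sq_sqrt (hW.1 x y), sq, mul_assoc])
    rw [hQ.2, one_mul] at this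
    have hsqrt : ∀ x, W x y ^ (1 / (1 + 1 : ℝ)) = √(W x y) := fun x => by
      rw [Real.sqrt_eq_rpow]; norm_num
    simp_rw [hsqrt, one_add_one_eq_two, rpow_two]
    exact this
  have hS : ∑ y, (∑ x, Q x * W x y ^ (1 / (1 + 1 : ℝ))) ^ (1 + 1 : ℝ) ≤ 1 :=
    (Finset.sum_le_sum fun y _ => hsq y).trans (hW.sum_output hQ).le
  have hS₀ : 0 ≤ ∑ y, (∑ x, Q x * W x y ^ (1 / (1 + 1 : ℝ))) ^ (1 + 1 : ℝ) :=
    Finset.sum_nonneg fun y _ => Real.rpow_nonneg (Finset.sum_nonneg fun x _ =>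
      mul_nonneg (hQ.1 x) (Real.rpow_nonneg (hW.1 x y) _)) _
  exact neg_nonneg.2 <| Real.log_nonpos hS₀ hS

lemma Eo_eq_zero_of_singular (hW : IsChannel W) (hpos : ∀ x y, 0 < W x y) (hQ : IsDist Q)
    (hsing : Singular W Q) {ρ : ℝ} (hρ : 0 ≤ ρ) : Eo W ρ Q = 0 := by
  obtain ⟨x₀, hx₀⟩ := hQ.exists_pos
  have hrow : ∀ x y, Q x * W x y ^ (1 / (1 + ρ)) = Q x * W x₀ y ^ (1 / (1 + ρ)) := by
    intro x y
    rcases (hQ.1 x).eq_or_lt with hx | hx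
    · simp [← hx]
    · rw [hsing x y x₀ (by have := hpos x y; have := hpos x₀ y; positivity)]
  have hterm : ∀ y, (∑ x, Q x * W x y ^ (1 / (1 + ρ))) ^ (1 + ρ) = W x₀ y := by
    intro y
    rw [Finset.sum_congr rfl fun x _ => hrow x y, ← Finset.sum_mul, hQ.2, one_mul,
      ← Real.rpow_mul (hW.1 x₀ y), one_div_mul_cancel (by positivity), Real.rpow_one]
  rw [Eo, Finset.sum_congr rfl fun y _ => hterm y, hW.2 x₀, log_one, neg_zero]

lemma Eo_le_neg_log [Nonempty Y] {c : ℝ} (hc : 0 < c) (hcW : ∀ x y, c ≤ W x y)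
    (hQ : IsDist Q) {ρ : ℝ} (hρ : 0 ≤ ρ) : Eo W ρ Q ≤ -log c := by
  have h1ρ : 0 < 1 + ρ := by linarith
  have hterm : ∀ y, c ≤ (∑ x, Q x * W x y ^ (1 / (1 + ρ))) ^ (1 + ρ) := by
    intro y
    have hinner : c ^ (1 / (1 + ρ)) ≤ ∑ x, Q x * W x y ^ (1 / (1 + ρ)) :=
      calc c ^ (1 / (1 + ρ)) = ∑ x, Q x * c ^ (1 / (1 + ρ)) := by
            rw [← Finset.sum_mul, hQ.2, one_mul]
        _ ≤ _ := Finset.sum_le_sum fun x _ => mul_le_mul_of_nonneg_left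
            (rpow_le_rpow hc.le (hcW x y) (by positivity)) (hQ.1 x)
    calc c = (c ^ (1 / (1 + ρ))) ^ (1 + ρ) := by
          rw [← rpow_mul hc.le, one_div_mul_cancel h1ρ.ne', rpow_one]
      _ ≤ _ := rpow_le_rpow (by positivity) hinner h1ρ.le
  obtain ⟨y₀⟩ := ‹Nonempty Y›
  have hsum : c ≤ ∑ y, (∑ x, Q x * W x y ^ (1 / (1 + ρ))) ^ (1 + ρ) :=
    (hterm y₀).trans <| Finset.single_le_sum (fun y _ => hc.le.trans (hterm y))
      (Finset.mem_univ y₀)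
  exact neg_le_neg (log_le_log hc hsum)

lemma exists_forall_neg_mul_add_Eo_le [Nonempty X] [Nonempty Y] (hpos : ∀ x y, 0 < W x y)
    (R : ℝ) :
    ∃ B, ∀ Q, IsDist Q → ∀ ρ ∈ Icc (0 : ℝ) 1, -ρ * R + Eo W ρ Q ≤ B := by
  obtain ⟨p, -, hp⟩ := Finset.univ.exists_min_image (fun p : X × Y => W p.1 p.2)
    Finset.univ_nonempty
  refine ⟨|R| - log (W p.1 p.2), fun Q hQ ρ hρ => ?_⟩
  have hρR : -ρ * R ≤ |R| := by
    nlinarith [hρ.1, hρ.2, le_abs_self R, neg_abs_le R]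
  have := Eo_le_neg_log (hpos p.1 p.2) (fun x y => hp (x, y) (Finset.mem_univ _)) hQ hρ.1
  linarith

lemma neg_mul_add_Eo_le_ErQ [Nonempty X] [Nonempty Y] (hpos : ∀ x y, 0 < W x y)
    (hQ : IsDist Q) {ρ : ℝ} (hρ : ρ ∈ Icc (0 : ℝ) 1) : -ρ * R + Eo W ρ Q ≤ ErQ W R Q := by
  obtain ⟨B, hB⟩ := exists_forall_neg_mul_add_Eo_le hpos R
  exact le_csSup ⟨B, by rintro _ ⟨ρ', hρ', rfl⟩; exact hB Q hQ ρ' hρ'⟩ ⟨ρ, hρ, rfl⟩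

lemma ErQ_le_Er [Nonempty X] [Nonempty Y] (hpos : ∀ x y, 0 < W x y) (hQ : IsDist Q) :
    ErQ W R Q ≤ Er W R := by
  obtain ⟨B, hB⟩ := exists_forall_neg_mul_add_Eo_le hpos R
  refine le_csSup ⟨B, ?_⟩ ⟨Q, hQ, rfl⟩
  rintro _ ⟨Q', hQ', rfl⟩
  exact csSup_le ⟨_, 0, left_mem_Icc.2 zero_le_one, rfl⟩
    (by rintro _ ⟨ρ, hρ, rfl⟩; exact hB Q' hQ' ρ hρ)

lemma ErQ_nonneg [Nonempty X] [Nonempty Y] (hW : IsChannel W) (hpos : ∀ x y, 0 < W x y)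
    (hQ : IsDist Q) : 0 ≤ ErQ W R Q := by
  simpa [Eo_zero hW hQ] using
    neg_mul_add_Eo_le_ErQ (R := R) hpos hQ (left_mem_Icc.2 zero_le_one)

lemma ErQ_eq_max_of_Eo_eq_zero (hEo : ∀ ρ ∈ Icc (0 : ℝ) 1, Eo W ρ Q = 0) :
    ErQ W R Q = max 0 (-R) := by
  refine IsGreatest.csSup_eq ⟨?_, ?_⟩
  · rcases le_total 0 R with hR | hR
    · exact ⟨0, left_mem_Icc.2 zero_le_one, by simp [hEo 0 (left_mem_Icc.2 zero_le_one), hR]⟩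
    · exact ⟨1, right_mem_Icc.2 zero_le_one, by simp [hEo 1 (right_mem_Icc.2 zero_le_one), hR]⟩
  · rintro _ ⟨ρ, hρ, rfl⟩
    dsimp only
    rw [hEo ρ hρ, add_zero]
    rcases le_total 0 R with hR | hR
    · exact le_max_of_le_left (by nlinarith [hρ.1])
    · exact le_max_of_le_right (by nlinarith [hρ.2])

lemma hasDerivAt_Eo_zero (hW : IsChannel W) (hpos : ∀ x y, 0 < W x y) (hQ : IsDist Q) :
    HasDerivAt (fun ρ => Eo W ρ Q) (MI W Q) 0 := by
  have hF := HasDerivAt.fun_sum fun y (_ : y ∈ Finset.univ) => hasDerivAt_Eo_summand hpos hQ y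
  have hF₀ : ∑ y, (∑ x, Q x * W x y ^ (1 / (1 + (0 : ℝ)))) ^ (1 + (0 : ℝ)) = 1 := by
    simpa using hW.sum_output hQ
  have hlog := (hF.log (by rw [hF₀]; exact one_ne_zero)).neg
  rw [hF₀, div_one] at hlog
  refine hlog.congr_deriv ?_
  rw [MI, Finset.sum_comm, ← Finset.sum_neg_distrib]
  refine Finset.sum_congr rfl fun y _ => ?_
  simp_rw [log_div (hpos _ y).ne' (hQ.sum_mul_pos hpos y).ne', mul_sub, Finset.sum_sub_distrib,
    ← Finset.sum_mul]
  ring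

lemma exists_pos_of_hasDerivAt_zero {Φ : ℝ → ℝ} {D : ℝ} (hΦ : HasDerivAt Φ D 0)
    (hΦ₀ : Φ 0 = 0) (hD : 0 < D) : ∃ ρ ∈ Ioc (0 : ℝ) 1, 0 < Φ ρ := by
  have hslope : ∀ᶠ ρ in 𝓝[>] (0 : ℝ), 0 < ρ⁻¹ • (Φ (0 + ρ) - Φ 0) :=
    hΦ.tendsto_slope_zero_right.eventually (eventually_gt_nhds hD)
  have hsmall : ∀ᶠ ρ in 𝓝[>] (0 : ℝ), ρ ∈ Ioc (0 : ℝ) 1 :=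
    Ioc_mem_nhdsGT zero_lt_one
  obtain ⟨ρ, hρΦ, hρ⟩ := (hslope.and hsmall).exists
  simp only [zero_add, hΦ₀, sub_zero, smul_eq_mul] at hρΦ
  exact ⟨ρ, hρ, pos_of_mul_pos_right hρΦ (inv_nonneg.2 hρ.1.le)⟩

lemma ErQ_pos_of_lt_MI [Nonempty X] [Nonempty Y] (hW : IsChannel W) (hpos : ∀ x y, 0 < W x y)
    (hQ : IsDist Q) (hR : R < MI W Q) : 0 < ErQ W R Q := by
  have hΦ : HasDerivAt (fun ρ => -ρ * R + Eo W ρ Q) (-R + MI W Q) 0 :=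
    (((hasDerivAt_neg 0).mul_const R).fun_add (hasDerivAt_Eo_zero hW hpos hQ)).congr_deriv
      (by ring)
  obtain ⟨ρ, hρ, hΦρ⟩ := exists_pos_of_hasDerivAt_zero hΦ (by simp [Eo_zero hW hQ])
    (by linarith)
  exact hΦρ.trans_le (neg_mul_add_Eo_le_ErQ hpos hQ (Ioc_subset_Icc_self hρ))

lemma exists_lt_MI_of_lt_Capacity [Nonempty X] (hR : R < Capacity W) :
    ∃ Q, IsDist Q ∧ R < MI W Q := by
  unfold Capacity at hR
  by_cases hbdd : BddAbove {v | ∃ Q, IsDist Q ∧ v = MI W Q}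
  · obtain ⟨_, ⟨Q, hQ, rfl⟩, hv⟩ := exists_lt_of_lt_csSup
      ⟨_, Set.mem_ofPred.2 ⟨_, isDist_uniform, rfl⟩⟩ hR
    exact ⟨Q, hQ, hv⟩
  · obtain ⟨_, ⟨Q, hQ, rfl⟩, hv⟩ := not_bddAbove_iff.1 hbdd R
    exact ⟨Q, hQ, hv⟩

lemma le_Rcr_of_Er_eq_neg [Nonempty X] [Nonempty Y] (hW : IsChannel W)
    (hpos : ∀ x y, 0 < W x y) (hEr : Er W R = -R) : R ≤ Rcr W := by
  have hEo₁ : ∀ Q, IsDist Q → Eo W 1 Q = 0 := fun Q hQ => by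
    have := (neg_mul_add_Eo_le_ErQ (R := R) hpos hQ (right_mem_Icc.2 zero_le_one)).trans
      (ErQ_le_Er hpos hQ)
    linarith [Eo_one_nonneg hW hQ]
  have hsup : sSup {v | ∃ Q, IsDist Q ∧ v = Eo W 1 Q} = 0 := by
    have : {v | ∃ Q, IsDist Q ∧ v = Eo W 1 Q} = {0} := by
      ext v
      refine ⟨fun ⟨Q, hQ, hv⟩ => hv.trans (hEo₁ Q hQ), fun hv => ?_⟩
      exact ⟨_, isDist_uniform, hv.trans (hEo₁ _ isDist_uniform).symm⟩
    rw [this, csSup_singleton]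
  simp only [Rcr, hsup, add_zero]
  refine le_csSup ⟨0, fun R' hR' => ?_⟩ hEr
  have := (ErQ_nonneg (R := R') hW hpos isDist_uniform).trans (ErQ_le_Er hpos isDist_uniform)
  replace hR' : Er W R' = -R' := hR'
  linarith

end

theorem statement8_general {X Y : Type*} [Fintype X] [Fintype Y] [Nonempty X] [Nonempty Y]
    (W : X → Y → ℝ) (hW : IsChannel W)
    (R : ℝ) (hR1 : Rcr W < R) (hR2 : R < Capacity W)
    (hpos : ∀ x y, 0 < W x y) :
    ∀ Q : X → ℝ, IsDist Q → ErQ W R Q = Er W R → ¬ Singular W Q := by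
  intro Q hQ hEr hsing
  have hErQ : ErQ W R Q = max 0 (-R) :=
    ErQ_eq_max_of_Eo_eq_zero fun ρ hρ => Eo_eq_zero_of_singular hW hpos hQ hsing hρ.1
  obtain ⟨Q₀, hQ₀, hMI⟩ := exists_lt_MI_of_lt_Capacity hR2
  have hEr_pos : 0 < Er W R :=
    (ErQ_pos_of_lt_MI hW hpos hQ₀ hMI).trans_le (ErQ_le_Er hpos hQ₀)
  have hR : R < 0 := by
    rw [← hEr, hErQ] at hEr_pos
    simpa using hEr_pos
  have hEr_neg : Er W R = -R := by rw [← hEr, hErQ, max_eq_right (by linarith)]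
  linarith [le_Rcr_of_Er_eq_neg hW hpos hEr_neg]

/-- For a positive channel, every `Q` achieving `E_r(R)` with `R ∈ (R_cr, C)`
forms a nonsingular pair with `W`. -/
theorem statement8 {X Y : Type*} [Fintype X] [Fintype Y] [Nonempty X] [Nonempty Y]
    (W : X → Y → ℝ) (hW : IsChannel W) (hcr : Rcr W < Capacity W)
    (R : ℝ) (hR1 : Rcr W < R) (hR2 : R < Capacity W)
    (hpos : ∀ x y, 0 < W x y) :
    ∀ Q : X → ℝ, IsDist Q → ErQ W R Q = Er W R → ¬ Singular W Q :=
  statement8_general W hW R hR1 hR2 hpos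

end RCB
end

section
/- Let W be a discrete memoryless channel with R_cr < C, Q ∈ P(𝒳) with E_r(R,Q) > 0 for some R > R_∞, and fix r ∈ (R_cr(Q), I(Q;W)). Put ρ := −∂E_r(a,Q)/∂a|_{a=r} ∈ (0,1) and ṽ := ( (1−ρ)/(1+ρ), 1/(1+ρ) ). Then the gradient of Λ_{1,ρ} at ṽ equals ( −Λ'_ρ(ρ/(1+ρ)), 0 ), i.e., ∂Λ_{1,ρ}(v₁,ṽ₂)/∂v₁|_{v₁=ṽ₁} = −Λ'_ρ(ρ/(1+ρ)) and ∂Λ_{1,ρ}(ṽ₁,v₂)/∂v₂|_{v₂=ṽ₂} = 0. -/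
open Real BigOperators
open scoped Classical

namespace RCB

/-!
Write `c = 1/(1+ρ)`. On `S̃_Q`, summing out `z` at `v₂ = c` produces
`∑_z Q(z) W(y|z)^c = (f_ρ(y) e^{-E_o(ρ,Q)})^c`, so `Λ_{1,ρ}(v₁, c) = Λ_ρ(c - v₁) + const` for every
`v₁`, and differentiating at `v₁ = 2c - 1` gives the first component. At `ṽ` the tilted weight of
`(x, y, z)` is symmetric under `x ↔ z`, while `log (W(y|z)/W(y|x))` is antisymmetric, so the
derivative in `v₂` vanishes. The computation needs `1 + ρ ≠ 0`; indeed `ρ ≥ 0` because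
`E_r(·, Q)` is nonincreasing.
-/

lemma Finset.sum_sum_sum_eq_zero_of_swap {α β M : Type*} [Fintype α] [Fintype β]
    [AddCommGroup M] [IsAddTorsionFree M] (g : α → β → α → M)
    (hg : ∀ x y z, g z y x = -g x y z) : ∑ x, ∑ y, ∑ z, g x y z = 0 := by
  refine self_eq_neg.mp ?_
  calc ∑ x, ∑ y, ∑ z, g x y z = ∑ y, ∑ x, ∑ z, g x y z := Finset.sum_comm
    _ = ∑ y, ∑ z, ∑ x, g x y z := Finset.sum_congr rfl fun _ _ => Finset.sum_comm
    _ = ∑ z, ∑ y, ∑ x, g x y z := Finset.sum_comm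
    _ = ∑ z, ∑ y, ∑ x, -g z y x := Finset.sum_congr rfl fun z _ =>
          Finset.sum_congr rfl fun y _ => Finset.sum_congr rfl fun x _ => hg z y x
    _ = -∑ x, ∑ y, ∑ z, g x y z := by simp only [Finset.sum_neg_distrib]

lemma IsDist.exists_pos_s14 {α : Type*} [Fintype α] {P : α → ℝ} (hP : IsDist P) : ∃ a, 0 < P a := by
  obtain ⟨a, -, ha⟩ := Finset.exists_lt_of_sum_lt (s := Finset.univ) (f := 0) (g := P)
    (by simp [hP.2])
  exact ⟨a, ha⟩

section

variable {X Y : Type*} {W : X → Y → ℝ} {Q : X → ℝ} {ρ : ℝ}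

/-- The unnormalised restriction of `P_{X,Y,Z}` to `S̃_Q`. -/
noncomputable def restrictedJoint (W : X → Y → ℝ) (Q : X → ℝ) (x : X) (y : Y) (z : X) : ℝ :=
  if 0 < Q x * W x y * (Q z * W z y) then Q x * W x y * Q z else 0

lemma restrictedJoint_nonneg (hW : ∀ x y, 0 ≤ W x y) (hQ : ∀ x, 0 ≤ Q x) (x : X) (y : Y)
    (z : X) : 0 ≤ restrictedJoint W Q x y z := by
  unfold restrictedJoint
  split_ifs
  · exact mul_nonneg (mul_nonneg (hQ x) (hW x y)) (hQ z)
  · exact le_rfl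

variable [Fintype X]

lemma sum_mul_rpow_pos (hW : ∀ x y, 0 ≤ W x y) (hQ : ∀ x, 0 ≤ Q x) {x : X} {y : Y}
    (hxy : 0 < Q x * W x y) : 0 < ∑ a, Q a * W a y ^ (1 / (1 + ρ)) :=
  Finset.sum_pos' (fun a _ => mul_nonneg (hQ a) (Real.rpow_nonneg (hW a y) _))
    ⟨x, Finset.mem_univ _, mul_pos (pos_of_mul_pos_left hxy (hW x y))
      (Real.rpow_pos_of_pos (pos_of_mul_pos_right hxy (hQ x)) _)⟩

variable [Fintype Y]

lemma IsChannel.exists_mul_pos (hW : IsChannel W) (hQ : IsDist Q) : ∃ x y, 0 < Q x * W x y := by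
  obtain ⟨x, hx⟩ := hQ.exists_pos_s14
  obtain ⟨y, hy⟩ := IsDist.exists_pos_s14 ⟨hW.1 x, hW.2 x⟩
  exact ⟨x, y, mul_pos hx hy⟩

lemma bddAbove_Eo_image_Icc (hW : IsChannel W) (hQ : IsDist Q) :
    BddAbove ((fun ρ => Eo W ρ Q) '' Set.Icc 0 1) := by
  obtain ⟨x, y, hxy⟩ := hW.exists_mul_pos hQ
  have hx : 0 < Q x := pos_of_mul_pos_left hxy (hW.1 x y)
  have hy : 0 < W x y := pos_of_mul_pos_right hxy (hQ.1 x)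
  have hx1 : Q x ≤ 1 := hQ.2 ▸ Finset.single_le_sum (fun a _ => hQ.1 a) (Finset.mem_univ x)
  refine ⟨-Real.log (Q x ^ (2 : ℝ) * W x y), ?_⟩
  rintro _ ⟨ρ, ⟨hρ0, hρ1⟩, rfl⟩
  have h1ρ : 0 < 1 + ρ := by linarith
  have hinner : ∀ b, 0 ≤ ∑ a, Q a * W a b ^ (1 / (1 + ρ)) := fun b =>
    Finset.sum_nonneg fun a _ => mul_nonneg (hQ.1 a) (Real.rpow_nonneg (hW.1 a b) _)
  -- the single term `(x, y)` of the Gallager sum already gives a lower bound uniform in `ρ`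
  have hterm : (Q x * W x y ^ (1 / (1 + ρ))) ^ (1 + ρ) = Q x ^ (1 + ρ) * W x y := by
    rw [Real.mul_rpow hx.le (Real.rpow_nonneg hy.le _), ← Real.rpow_mul hy.le,
      one_div_mul_cancel h1ρ.ne', Real.rpow_one]
  have hlow : Q x ^ (2 : ℝ) * W x y ≤ ∑ b, (∑ a, Q a * W a b ^ (1 / (1 + ρ))) ^ (1 + ρ) :=
    calc Q x ^ (2 : ℝ) * W x y ≤ Q x ^ (1 + ρ) * W x y :=
          mul_le_mul_of_nonneg_right
            (Real.rpow_le_rpow_of_exponent_ge hx hx1 (by linarith)) hy.le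
      _ ≤ (∑ a, Q a * W a y ^ (1 / (1 + ρ))) ^ (1 + ρ) := by
          rw [← hterm]
          gcongr
          exact Finset.single_le_sum (f := fun a => Q a * W a y ^ (1 / (1 + ρ)))
            (fun a _ => mul_nonneg (hQ.1 a) (Real.rpow_nonneg (hW.1 a y) _)) (Finset.mem_univ x)
      _ ≤ _ := Finset.single_le_sum (f := fun b => (∑ a, Q a * W a b ^ (1 / (1 + ρ))) ^ (1 + ρ))
            (fun b _ => Real.rpow_nonneg (hinner b) _) (Finset.mem_univ y)
  exact neg_le_neg (Real.log_le_log (by positivity) hlow)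

lemma antitone_ErQ (hW : IsChannel W) (hQ : IsDist Q) : Antitone fun R => ErQ W R Q := by
  obtain ⟨B, hB⟩ := bddAbove_Eo_image_Icc hW hQ
  intro a b hab
  have hbdd : BddAbove ((fun ρ => -ρ * a + Eo W ρ Q) '' Set.Icc 0 1) := by
    refine ⟨|a| + B, ?_⟩
    rintro _ ⟨ρ, hρ, rfl⟩
    have : -ρ * a ≤ |a| := by
      nlinarith [neg_abs_le a, hρ.1, hρ.2, abs_nonneg a]
    linarith [hB ⟨ρ, hρ, rfl⟩]
  refine csSup_le ⟨_, 0, ⟨le_rfl, zero_le_one⟩, rfl⟩ ?_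
  rintro _ ⟨ρ, hρ, rfl⟩
  refine le_trans ?_ (le_csSup hbdd ⟨ρ, hρ, rfl⟩)
  nlinarith [hρ.1]

lemma deriv_ErQ_nonpos (hW : IsChannel W) (hQ : IsDist Q) (R : ℝ) :
    deriv (fun a => ErQ W a Q) R ≤ 0 :=
  (antitone_ErQ hW hQ).deriv_nonpos

lemma sum_rpow_sum_mul_rpow_pos (hW : ∀ x y, 0 ≤ W x y) (hQ : ∀ x, 0 ≤ Q x) {x : X} {y : Y}
    (hxy : 0 < Q x * W x y) : 0 < ∑ b, (∑ a, Q a * W a b ^ (1 / (1 + ρ))) ^ (1 + ρ) :=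
  Finset.sum_pos' (fun b _ => Real.rpow_nonneg
      (Finset.sum_nonneg fun a _ => mul_nonneg (hQ a) (Real.rpow_nonneg (hW a b) _)) _)
    ⟨y, Finset.mem_univ _, Real.rpow_pos_of_pos (sum_mul_rpow_pos hW hQ hxy) _⟩

lemma fRho_pos (hW : ∀ x y, 0 ≤ W x y) (hQ : ∀ x, 0 ≤ Q x) {x : X} {y : Y}
    (hxy : 0 < Q x * W x y) : 0 < fRho W Q ρ y :=
  div_pos (Real.rpow_pos_of_pos (sum_mul_rpow_pos hW hQ hxy) _)
    (sum_rpow_sum_mul_rpow_pos hW hQ hxy)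

lemma log_fRho (hW : ∀ x y, 0 ≤ W x y) (hQ : ∀ x, 0 ≤ Q x) {x : X} {y : Y}
    (hxy : 0 < Q x * W x y) :
    Real.log (fRho W Q ρ y) =
      (1 + ρ) * Real.log (∑ a, Q a * W a y ^ (1 / (1 + ρ))) + Eo W ρ Q := by
  rw [fRho, Eo, Real.log_div (Real.rpow_pos_of_pos (sum_mul_rpow_pos hW hQ hxy) _).ne'
    (sum_rpow_sum_mul_rpow_pos hW hQ hxy).ne', Real.log_rpow (sum_mul_rpow_pos hW hQ hxy)]
  ring

lemma sum_mul_exp_pos (hW : IsChannel W) (hQ : IsDist Q) (e : X → Y → ℝ) :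
    0 < ∑ x, ∑ y, Q x * W x y * Real.exp (e x y) := by
  obtain ⟨x, y, hxy⟩ := hW.exists_mul_pos hQ
  have hnn : ∀ x y, 0 ≤ Q x * W x y * Real.exp (e x y) := fun x y =>
    mul_nonneg (mul_nonneg (hQ.1 x) (hW.1 x y)) (Real.exp_pos _).le
  refine Finset.sum_pos' (fun x _ => Finset.sum_nonneg fun y _ => hnn x y)
    ⟨x, Finset.mem_univ _, ?_⟩
  exact Finset.sum_pos' (fun y _ => hnn x y) ⟨y, Finset.mem_univ _, mul_pos hxy (Real.exp_pos _)⟩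

lemma PStilde_eq_sum_restrictedJoint :
    PStilde W Q = ∑ x, ∑ y, ∑ z, restrictedJoint W Q x y z := rfl

lemma Lam1_eq_log_sum (v : ℝ × ℝ) :
    Lam1 W Q ρ v = Real.log ((∑ x, ∑ y, ∑ z, restrictedJoint W Q x y z *
      Real.exp (v.1 * Real.log (W x y / fRho W Q ρ y) + v.2 * Real.log (W z y / W x y))) /
        PStilde W Q) := by
  simp only [Lam1, restrictedJoint, ite_mul, zero_mul]

lemma sum_restrictedJoint_mul_exp_pos (hW : IsChannel W) (hQ : IsDist Q)
    (e : X → Y → X → ℝ) :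
    0 < ∑ x, ∑ y, ∑ z, restrictedJoint W Q x y z * Real.exp (e x y z) := by
  obtain ⟨x, y, hxy⟩ := hW.exists_mul_pos hQ
  have hnn : ∀ x y z, 0 ≤ restrictedJoint W Q x y z * Real.exp (e x y z) := fun x y z =>
    mul_nonneg (restrictedJoint_nonneg hW.1 hQ.1 x y z) (Real.exp_pos _).le
  have hxyx : 0 < restrictedJoint W Q x y x := by
    rw [restrictedJoint, if_pos (mul_pos hxy hxy)]
    exact mul_pos hxy (pos_of_mul_pos_left hxy (hW.1 x y))
  refine Finset.sum_pos' (fun x _ => Finset.sum_nonneg fun y _ => Finset.sum_nonneg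
    fun z _ => hnn x y z) ⟨x, Finset.mem_univ _, ?_⟩
  refine Finset.sum_pos' (fun y _ => Finset.sum_nonneg fun z _ => hnn x y z)
    ⟨y, Finset.mem_univ _, ?_⟩
  exact Finset.sum_pos' (fun z _ => hnn x y z)
    ⟨x, Finset.mem_univ _, mul_pos hxyx (Real.exp_pos _)⟩

lemma PStilde_pos (hW : IsChannel W) (hQ : IsDist Q) : 0 < PStilde W Q := by
  rw [PStilde_eq_sum_restrictedJoint]
  simpa using sum_restrictedJoint_mul_exp_pos hW hQ fun _ _ _ => 0

lemma sum_restrictedJoint_mul_exp (hW : ∀ x y, 0 ≤ W x y) (hQ : ∀ x, 0 ≤ Q x)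
    (hρ : 1 + ρ ≠ 0) (x : X) (y : Y) (v : ℝ) :
    ∑ z, restrictedJoint W Q x y z * Real.exp (v * Real.log (W x y / fRho W Q ρ y) +
        1 / (1 + ρ) * Real.log (W z y / W x y)) =
      Real.exp (-(Eo W ρ Q / (1 + ρ))) *
        (Q x * W x y * Real.exp ((1 / (1 + ρ) - v) * Real.log (fRho W Q ρ y / W x y))) := by
  rcases (mul_nonneg (hQ x) (hW x y)).eq_or_lt with hxy | hxy
  · simp [restrictedJoint, ← hxy]
  have hWx : 0 < W x y := pos_of_mul_pos_right hxy (hQ x)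
  have hf : 0 < fRho W Q ρ y := fRho_pos hW hQ hxy
  have hterm : ∀ z, restrictedJoint W Q x y z * Real.exp (v * Real.log (W x y / fRho W Q ρ y) +
      1 / (1 + ρ) * Real.log (W z y / W x y)) =
      Q x * W x y * Real.exp (v * Real.log (W x y / fRho W Q ρ y) -
        1 / (1 + ρ) * Real.log (W x y)) * (Q z * W z y ^ (1 / (1 + ρ))) := by
    intro z
    rcases (mul_nonneg (hQ z) (hW z y)).eq_or_lt with hzy | hzy
    · have hz : Q z * W z y ^ (1 / (1 + ρ)) = 0 := by
        rcases mul_eq_zero.mp hzy.symm with h | h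
        · rw [h, zero_mul]
        · rw [h, Real.zero_rpow (one_div_ne_zero hρ), mul_zero]
      rw [hz, mul_zero, restrictedJoint, if_neg (by rw [← hzy, mul_zero]; exact lt_irrefl 0),
        zero_mul]
    · have hWz : 0 < W z y := pos_of_mul_pos_right hzy (hQ z)
      rw [restrictedJoint, if_pos (mul_pos hxy hzy), Real.rpow_def_of_pos hWz,
        Real.log_div hWz.ne' hWx.ne',
        show ∀ a b c d : ℝ, a + d * (b - c) = (a - d * c) + b * d from fun a b c d => by ring,
        Real.exp_add]
      ring
  have hlogA : Real.log (∑ a, Q a * W a y ^ (1 / (1 + ρ))) =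
      1 / (1 + ρ) * (Real.log (fRho W Q ρ y) - Eo W ρ Q) := by
    rw [log_fRho hW hQ hxy]
    field_simp
    ring
  have hexp : v * Real.log (W x y / fRho W Q ρ y) - 1 / (1 + ρ) * Real.log (W x y) +
      Real.log (∑ a, Q a * W a y ^ (1 / (1 + ρ))) =
      -(Eo W ρ Q / (1 + ρ)) + (1 / (1 + ρ) - v) * Real.log (fRho W Q ρ y / W x y) := by
    rw [hlogA, Real.log_div hWx.ne' hf.ne', Real.log_div hf.ne' hWx.ne']
    ring
  rw [Finset.sum_congr rfl fun z _ => hterm z, ← Finset.mul_sum,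
    ← Real.exp_log (sum_mul_rpow_pos hW hQ hxy), mul_assoc, ← Real.exp_add, hexp, Real.exp_add]
  ring

lemma Lam1_one_div_one_add (hW : IsChannel W) (hQ : IsDist Q) (hρ : 1 + ρ ≠ 0) (v : ℝ) :
    Lam1 W Q ρ (v, 1 / (1 + ρ)) =
      Lam W Q ρ (1 / (1 + ρ) - v) - Eo W ρ Q / (1 + ρ) - Real.log (PStilde W Q) := by
  rw [Lam1_eq_log_sum]
  simp only [sum_restrictedJoint_mul_exp hW.1 hQ.1 hρ, ← Finset.mul_sum]
  rw [Real.log_div (mul_pos (Real.exp_pos _) (sum_mul_exp_pos hW hQ _)).ne'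
      (PStilde_pos hW hQ).ne', Real.log_mul (Real.exp_pos _).ne' (sum_mul_exp_pos hW hQ _).ne',
    Real.log_exp, Lam]
  ring

lemma deriv_Lam1_fst (hW : IsChannel W) (hQ : IsDist Q) (hρ : 1 + ρ ≠ 0) (s : ℝ) :
    deriv (fun v => Lam1 W Q ρ (v, 1 / (1 + ρ))) s = -deriv (Lam W Q ρ) (1 / (1 + ρ) - s) := by
  simp only [Lam1_one_div_one_add hW hQ hρ, deriv_sub_const]
  exact deriv_comp_const_sub _ _ _

-- At `v = ((1-ρ)/(1+ρ), 1/(1+ρ))` the tilted weight of `(x, y, z)` is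
-- `Q x Q z (W x y W z y)^(1/(1+ρ)) / fRho^((1-ρ)/(1+ρ))`, symmetric in `x` and `z`.
lemma restrictedJoint_mul_exp_swap (hW : ∀ x y, 0 ≤ W x y) (hQ : ∀ x, 0 ≤ Q x)
    (hρ : 1 + ρ ≠ 0) (x : X) (y : Y) (z : X) :
    restrictedJoint W Q z y x * Real.exp ((1 - ρ) / (1 + ρ) * Real.log (W z y / fRho W Q ρ y) +
        1 / (1 + ρ) * Real.log (W x y / W z y)) =
      restrictedJoint W Q x y z * Real.exp ((1 - ρ) / (1 + ρ) *
        Real.log (W x y / fRho W Q ρ y) + 1 / (1 + ρ) * Real.log (W z y / W x y)) := by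
  by_cases h : 0 < Q x * W x y * (Q z * W z y)
  · have hxy := pos_of_mul_pos_left h (mul_nonneg (hQ z) (hW z y))
    have hzy := pos_of_mul_pos_right h (mul_nonneg (hQ x) (hW x y))
    have hf : 0 < fRho W Q ρ y := fRho_pos hW hQ hxy
    have hsymm : ∀ a b, 0 < W a y → 0 < W b y →
        Q a * W a y * Q b * Real.exp ((1 - ρ) / (1 + ρ) * Real.log (W a y / fRho W Q ρ y) +
          1 / (1 + ρ) * Real.log (W b y / W a y)) =
        Q a * Q b * Real.exp (1 / (1 + ρ) * (Real.log (W a y) + Real.log (W b y)) -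
          (1 - ρ) / (1 + ρ) * Real.log (fRho W Q ρ y)) := by
      intro a b ha hb
      rw [Real.log_div ha.ne' hf.ne', Real.log_div hb.ne' ha.ne']
      calc _ = Q a * Q b * Real.exp (Real.log (W a y) + ((1 - ρ) / (1 + ρ) *
              (Real.log (W a y) - Real.log (fRho W Q ρ y)) +
                1 / (1 + ρ) * (Real.log (W b y) - Real.log (W a y)))) := by
            rw [Real.exp_add (Real.log _), Real.exp_log ha]
            ring
        _ = _ := by
            congr 2
            field_simp
            ring
    rw [restrictedJoint, restrictedJoint, if_pos (by rwa [mul_comm]), if_pos h,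
      hsymm z x (pos_of_mul_pos_right hzy (hQ z)) (pos_of_mul_pos_right hxy (hQ x)),
      hsymm x z (pos_of_mul_pos_right hxy (hQ x)) (pos_of_mul_pos_right hzy (hQ z)),
      mul_comm (Q z), add_comm (Real.log (W z y))]
  · rw [restrictedJoint, restrictedJoint, if_neg (by rwa [mul_comm]), if_neg h, zero_mul,
      zero_mul]

lemma sum_restrictedJoint_mul_exp_mul_log_eq_zero (hW : ∀ x y, 0 ≤ W x y)
    (hQ : ∀ x, 0 ≤ Q x) (hρ : 1 + ρ ≠ 0) :
    ∑ x, ∑ y, ∑ z, restrictedJoint W Q x y z *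
      (Real.exp ((1 - ρ) / (1 + ρ) * Real.log (W x y / fRho W Q ρ y) +
        1 / (1 + ρ) * Real.log (W z y / W x y)) * Real.log (W z y / W x y)) = 0 := by
  refine Finset.sum_sum_sum_eq_zero_of_swap _ fun x y z => ?_
  rw [← mul_assoc, restrictedJoint_mul_exp_swap hW hQ hρ, ← mul_assoc, ← mul_neg,
    ← Real.log_inv, inv_div]

lemma hasDerivAt_Lam1_snd (hW : IsChannel W) (hQ : IsDist Q) (s t : ℝ) :
    HasDerivAt (fun u => Lam1 W Q ρ (s, u))
      ((∑ x, ∑ y, ∑ z, restrictedJoint W Q x y z *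
          (Real.exp (s * Real.log (W x y / fRho W Q ρ y) + t * Real.log (W z y / W x y)) *
            Real.log (W z y / W x y))) /
        ∑ x, ∑ y, ∑ z, restrictedJoint W Q x y z *
          Real.exp (s * Real.log (W x y / fRho W Q ρ y) + t * Real.log (W z y / W x y))) t := by
  have hsum : HasDerivAt (fun u => ∑ x, ∑ y, ∑ z, restrictedJoint W Q x y z *
        Real.exp (s * Real.log (W x y / fRho W Q ρ y) + u * Real.log (W z y / W x y)))
      (∑ x, ∑ y, ∑ z, restrictedJoint W Q x y z *
        (Real.exp (s * Real.log (W x y / fRho W Q ρ y) + t * Real.log (W z y / W x y)) *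
          Real.log (W z y / W x y))) t :=
    HasDerivAt.fun_sum fun x _ => HasDerivAt.fun_sum fun y _ => HasDerivAt.fun_sum fun z _ =>
      (((hasDerivAt_mul_const _).const_add _).exp).const_mul _
  have hP := PStilde_pos hW hQ
  simp only [Lam1_eq_log_sum]
  rw [← div_div_div_cancel_right₀ hP.ne']
  exact (hsum.div_const _).log (div_pos (sum_restrictedJoint_mul_exp_pos hW hQ _) hP).ne'

end

theorem statement14_general {X Y : Type*} [Fintype X] [Fintype Y]
    (W : X → Y → ℝ) (hW : IsChannel W)
    (Q : X → ℝ) (hQ : IsDist Q)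
    (r : ℝ)
    (ρ : ℝ) (hρ : ρ = - deriv (fun a => ErQ W a Q) r) :
    deriv (fun v₁ => Lam1 W Q ρ (v₁, 1 / (1 + ρ))) ((1 - ρ) / (1 + ρ)) =
        - deriv (fun t => Lam W Q ρ t) (ρ / (1 + ρ)) ∧
      deriv (fun v₂ => Lam1 W Q ρ ((1 - ρ) / (1 + ρ), v₂)) (1 / (1 + ρ)) = 0 := by
  have hρ0 : 0 ≤ ρ := hρ ▸ neg_nonneg.mpr (deriv_ErQ_nonpos hW hQ r)
  have h1ρ : 1 + ρ ≠ 0 := by positivity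
  refine ⟨?_, ?_⟩
  · rw [deriv_Lam1_fst hW hQ h1ρ]
    congr 2
    field_simp
    ring
  · rw [(hasDerivAt_Lam1_snd hW hQ _ _).deriv,
      sum_restrictedJoint_mul_exp_mul_log_eq_zero hW.1 hQ.1 h1ρ, zero_div]

/-- The gradient of `Λ_{1,ρ}` at `ṽ = ((1-ρ)/(1+ρ), 1/(1+ρ))` equals
`(-Λ'_ρ(ρ/(1+ρ)), 0)`. -/
theorem statement14 {X Y : Type*} [Fintype X] [Fintype Y] [Nonempty X] [Nonempty Y]
    (W : X → Y → ℝ) (hW : IsChannel W) (hcr : Rcr W < Capacity W)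
    (Q : X → ℝ) (hQ : IsDist Q)
    (hEr : ∃ R : ℝ, Rinf W < R ∧ 0 < ErQ W R Q)
    (r : ℝ) (hr1 : RcrQ W Q < r) (hr2 : r < MI W Q)
    (ρ : ℝ) (hρ : ρ = - deriv (fun a => ErQ W a Q) r) :
    deriv (fun v₁ => Lam1 W Q ρ (v₁, 1 / (1 + ρ))) ((1 - ρ) / (1 + ρ)) =
        - deriv (fun t => Lam W Q ρ t) (ρ / (1 + ρ)) ∧
      deriv (fun v₂ => Lam1 W Q ρ ((1 - ρ) / (1 + ρ), v₂)) (1 / (1 + ρ)) = 0 :=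
  statement14_general W hW Q hQ r ρ hρ

end RCB
end

section
/- Let W be a discrete memoryless channel with R_cr < C, and let Q ∈ P(𝒳) and R be such that the pair (Q,W) is singular and R_cr(Q) < R < I(Q;W). Put ρ* := −∂E_r(r,Q)/∂r|_{r=R} and let Λ(λ) := Λ_{ρ*}(λ). Then Λ''(λ) > 0 for every λ ∈ ℝ. -/
open Real BigOperators
open scoped Classical

namespace RCB

/-! In the singular case all inputs that can produce `y` have the same transition probability
into `y`. Writing `m(y) = Q{x : W(y|x) > 0}`, the Gallager term of `y` becomes `m(y)^ρ P_Y(y)`,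
and on the support of `P_{X,Y}` the ratio `f_ρ(y) / W(y|x)` is proportional to `m(y)^(1+ρ)`.
Since `Λ` is a log-moment generating function, `Λ''` is a variance under a tilted law with the
same support, so it is positive unless the log-likelihood ratio is a.s. constant. That would make
`m` a constant `q` on the support, hence `E_o(ρ, Q) = -ρ log q` and `R_cr(Q) = I(Q;W) = -log q`,
leaving no room for `R`. Here `ρ* ≥ 0` because `E_r(·, Q)` is nonincreasing, so `1 + ρ* ≠ 0`. -/

section LogSumExp

variable {ι : Type*} [Fintype ι]

lemma sum_sum_mul_mul_sub_sq (w z : ι → ℝ) :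
    ∑ i, ∑ j, w i * w j * (z i - z j) ^ 2
      = 2 * ((∑ i, w i * z i ^ 2) * ∑ i, w i - (∑ i, w i * z i) ^ 2) := by
  have h : ∀ i j, w i * w j * (z i - z j) ^ 2
      = w i * z i ^ 2 * w j - 2 * (w i * z i) * (w j * z j) + w i * (w j * z j ^ 2) :=
    fun i j => by ring
  simp only [h, Finset.sum_add_distrib, Finset.sum_sub_distrib, ← Finset.mul_sum,
    ← Finset.sum_mul]
  ring

lemma sq_sum_mul_lt_sum_mul_sq_mul_sum {w z : ι → ℝ} (hw : ∀ i, 0 ≤ w i) {p q : ι}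
    (hp : 0 < w p) (hq : 0 < w q) (hpq : z p ≠ z q) :
    (∑ i, w i * z i) ^ 2 < (∑ i, w i * z i ^ 2) * ∑ i, w i := by
  have hterm : ∀ i j, 0 ≤ w i * w j * (z i - z j) ^ 2 := fun i j => by
    have := hw i; have := hw j; positivity
  have hpos : 0 < ∑ i, ∑ j, w i * w j * (z i - z j) ^ 2 := by
    refine Finset.sum_pos' (fun i _ => Finset.sum_nonneg fun j _ => hterm i j)
      ⟨p, Finset.mem_univ p, Finset.sum_pos' (fun j _ => hterm p j) ⟨q, Finset.mem_univ q, ?_⟩⟩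
    have := sub_ne_zero.2 hpq
    positivity
  linarith [sum_sum_mul_mul_sub_sq w z]

lemma hasDerivAt_sum_mul_pow_mul_exp (c z : ι → ℝ) (n : ℕ) (s : ℝ) :
    HasDerivAt (fun s => ∑ i, c i * z i ^ n * exp (s * z i))
      (∑ i, c i * z i ^ (n + 1) * exp (s * z i)) s := by
  refine HasDerivAt.fun_sum fun i _ => ?_
  exact (((hasDerivAt_mul_const (z i)).exp).const_mul (c i * z i ^ n)).congr_deriv (by ring)

lemma deriv_deriv_log_sum_exp_pos {c z : ι → ℝ} (hc : ∀ i, 0 ≤ c i) {p q : ι}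
    (hp : 0 < c p) (hq : 0 < c q) (hpq : z p ≠ z q) (t : ℝ) :
    0 < deriv (deriv fun s => log (∑ i, c i * exp (s * z i))) t := by
  set M : ℕ → ℝ → ℝ := fun n s => ∑ i, c i * z i ^ n * exp (s * z i)
  have hM : ∀ n s, HasDerivAt (M n) (M (n + 1) s) s := hasDerivAt_sum_mul_pow_mul_exp c z
  have hpos : ∀ s, 0 < M 0 s := fun s =>
    Finset.sum_pos' (fun i _ => by have := hc i; positivity)
      ⟨p, Finset.mem_univ p, by simpa using mul_pos hp (exp_pos (s * z p))⟩
  have hderiv : deriv (fun s => log (∑ i, c i * exp (s * z i))) = fun s => M 1 s / M 0 s := by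
    funext s
    simpa [M] using ((hM 0 s).log (hpos s).ne').deriv
  rw [hderiv, ((hM 1 t).fun_div (hM 0 t) (hpos t).ne').deriv]
  refine div_pos ?_ (pow_pos (hpos t) 2)
  have := sq_sum_mul_lt_sum_mul_sq_mul_sum (w := fun i => c i * exp (t * z i)) (z := z)
    (fun i => by have := hc i; positivity) (mul_pos hp (exp_pos _)) (mul_pos hq (exp_pos _)) hpq
  simp only [M, pow_zero, mul_one, pow_one, zero_add, one_add_one_eq_two]
  simp only [mul_right_comm _ _ (exp _), mul_assoc] at this ⊢
  nlinarith [this]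

end LogSumExp

lemma antitone_sSup_image_Icc_affine {f : ℝ → ℝ} (hf : ContinuousOn f (Set.Icc 0 1)) :
    Antitone fun R => sSup ((fun ρ => -ρ * R + f ρ) '' Set.Icc (0 : ℝ) 1) := by
  intro a b hab
  refine csSup_le ((Set.nonempty_Icc.2 zero_le_one).image _) ?_
  rintro _ ⟨ρ, hρ, rfl⟩
  have hbdd : BddAbove ((fun ρ => -ρ * a + f ρ) '' Set.Icc (0 : ℝ) 1) :=
    isCompact_Icc.bddAbove_image ((continuousOn_id.neg.mul continuousOn_const).add hf)
  calc -ρ * b + f ρ ≤ -ρ * a + f ρ := by nlinarith [hρ.1]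
    _ ≤ _ := le_csSup hbdd ⟨ρ, hρ, rfl⟩

section Channel

variable {X Y : Type*} [Fintype X] {W : X → Y → ℝ} {Q : X → ℝ}

lemma sum_sum_mul_eq_one [Fintype Y] (hW : IsChannel W) (hQ : IsDist Q) :
    ∑ x, ∑ y, Q x * W x y = 1 := by
  simp [← Finset.mul_sum, hW.2, hQ.2]

lemma exists_pos_joint [Fintype Y] (hW : IsChannel W) (hQ : IsDist Q) :
    ∃ x y, 0 < Q x * W x y := by
  obtain ⟨x, -, hx⟩ := Finset.exists_ne_zero_of_sum_ne_zero
    ((sum_sum_mul_eq_one hW hQ).symm ▸ one_ne_zero : ∑ x, ∑ y, Q x * W x y ≠ 0)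
  obtain ⟨y, -, hy⟩ := Finset.exists_ne_zero_of_sum_ne_zero hx
  exact ⟨x, y, (mul_nonneg (hQ.1 x) (hW.1 x y)).lt_of_ne' hy⟩

lemma gallager_sum_pos [Fintype Y] (hW : ∀ x y, 0 ≤ W x y) (hQ : ∀ x, 0 ≤ Q x)
    {x₀ : X} {y₀ : Y} (h₀ : 0 < Q x₀ * W x₀ y₀) (ρ : ℝ) :
    0 < ∑ y, (∑ x, Q x * W x y ^ (1 / (1 + ρ))) ^ (1 + ρ) := by
  have hinner : ∀ y, 0 ≤ ∑ x, Q x * W x y ^ (1 / (1 + ρ)) := fun y =>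
    Finset.sum_nonneg fun x _ => mul_nonneg (hQ x) (rpow_nonneg (hW x y) _)
  refine Finset.sum_pos' (fun y _ => rpow_nonneg (hinner y) _) ⟨y₀, Finset.mem_univ _, ?_⟩
  refine rpow_pos_of_pos (Finset.sum_pos' (fun x _ => ?_) ⟨x₀, Finset.mem_univ _, ?_⟩) _
  · exact mul_nonneg (hQ x) (rpow_nonneg (hW x y₀) _)
  · exact mul_pos (pos_of_mul_pos_left h₀ (hW x₀ y₀))
      (rpow_pos_of_pos (pos_of_mul_pos_right h₀ (hQ x₀)) _)

lemma continuousOn_Eo [Fintype Y] (hW : ∀ x y, 0 ≤ W x y) (hQ : ∀ x, 0 ≤ Q x)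
    {x₀ : X} {y₀ : Y} (h₀ : 0 < Q x₀ * W x₀ y₀) :
    ContinuousOn (fun ρ => Eo W ρ Q) (Set.Ioi (-1)) := by
  have hexp : ∀ ρ ∈ Set.Ioi (-1 : ℝ), 0 < 1 + ρ := fun ρ hρ => by
    rw [Set.mem_Ioi] at hρ; linarith
  have hS : ContinuousOn (fun ρ : ℝ => ∑ y, (∑ x, Q x * W x y ^ (1 / (1 + ρ))) ^ (1 + ρ))
      (Set.Ioi (-1)) := by
    refine continuousOn_finsetSum _ fun y _ => ?_
    refine ContinuousOn.rpow ?_ (continuousOn_const.add continuousOn_id)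
      fun ρ hρ => Or.inr (hexp ρ hρ)
    refine continuousOn_finsetSum _ fun x _ => continuousOn_const.mul ?_
    refine continuousOn_const.rpow ?_ fun ρ hρ => Or.inr (one_div_pos.2 (hexp ρ hρ))
    exact continuousOn_const.div (continuousOn_const.add continuousOn_id)
      fun ρ hρ => (hexp ρ hρ).ne'
  exact (hS.log fun ρ _ => (gallager_sum_pos hW hQ h₀ ρ).ne').neg

lemma antitone_ErQ_s16 [Fintype Y] (hW : ∀ x y, 0 ≤ W x y) (hQ : ∀ x, 0 ≤ Q x)
    {x₀ : X} {y₀ : Y} (h₀ : 0 < Q x₀ * W x₀ y₀) : Antitone fun R => ErQ W R Q :=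
  antitone_sSup_image_Icc_affine <| (continuousOn_Eo hW hQ h₀).mono fun ρ hρ => by
    rw [Set.mem_Ioi]; linarith [hρ.1]

noncomputable def supportMass (W : X → Y → ℝ) (Q : X → ℝ) (y : Y) : ℝ :=
  ∑ x, if 0 < W x y then Q x else 0

lemma supportMass_nonneg (hQ : ∀ x, 0 ≤ Q x) (y : Y) : 0 ≤ supportMass W Q y :=
  Finset.sum_nonneg fun x _ => by split_ifs <;> simp [hQ x]

lemma supportMass_pos (hQ : ∀ x, 0 ≤ Q x) {x : X} {y : Y} (h : 0 < Q x * W x y) :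
    0 < supportMass W Q y := by
  refine Finset.sum_pos' (fun x _ => by split_ifs <;> simp [hQ x]) ⟨x, Finset.mem_univ x, ?_⟩
  have hW : 0 < W x y := pos_of_mul_pos_right h (hQ x)
  rwa [if_pos hW, pos_iff_pos_of_mul_pos h]

lemma sum_mul_rpow_of_singular (hsing : Singular W Q) (hW : ∀ x y, 0 ≤ W x y)
    (hQ : ∀ x, 0 ≤ Q x) {s : ℝ} (hs : s ≠ 0) {x' : X} {y : Y} (h' : 0 < Q x' * W x' y) :
    ∑ x, Q x * W x y ^ s = supportMass W Q y * W x' y ^ s := by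
  rw [supportMass, Finset.sum_mul]
  refine Finset.sum_congr rfl fun x _ => ?_
  by_cases hWx : 0 < W x y
  · rcases (hQ x).eq_or_lt with hQx | hQx
    · simp [← hQx]
    · rw [if_pos hWx, hsing x y x' (mul_pos (mul_pos hQx hWx) h')]
  · rw [if_neg hWx, (not_lt.1 hWx).antisymm (hW x y), zero_rpow hs, mul_zero, zero_mul]

lemma sum_mul_of_singular (hsing : Singular W Q) (hW : ∀ x y, 0 ≤ W x y)
    (hQ : ∀ x, 0 ≤ Q x) {x' : X} {y : Y} (h' : 0 < Q x' * W x' y) :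
    ∑ x, Q x * W x y = supportMass W Q y * W x' y := by
  simpa using sum_mul_rpow_of_singular hsing hW hQ one_ne_zero h'

lemma gallager_term_of_singular (hsing : Singular W Q) (hW : ∀ x y, 0 ≤ W x y)
    (hQ : ∀ x, 0 ≤ Q x) {σ : ℝ} (hσ : 1 + σ ≠ 0) (y : Y) :
    (∑ x, Q x * W x y ^ (1 / (1 + σ))) ^ (1 + σ)
      = supportMass W Q y ^ σ * ∑ x, Q x * W x y := by
  have hm := supportMass_nonneg (W := W) hQ y
  by_cases hy : ∃ x', 0 < Q x' * W x' y
  · obtain ⟨x', hx'⟩ := hy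
    rw [sum_mul_rpow_of_singular hsing hW hQ (one_div_ne_zero hσ) hx',
      sum_mul_of_singular hsing hW hQ hx', mul_rpow hm (rpow_nonneg (hW x' y) _),
      ← rpow_mul (hW x' y), one_div_mul_cancel hσ, rpow_one, add_comm 1 σ,
      rpow_add_one' hm (by rwa [add_comm])]
    ring
  · push Not at hy
    have hzero : ∀ x, Q x * W x y = 0 := fun x => (hy x).antisymm (mul_nonneg (hQ x) (hW x y))
    have hzero' : ∀ x, Q x * W x y ^ (1 / (1 + σ)) = 0 := fun x => by
      rcases mul_eq_zero.1 (hzero x) with h | h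
      · rw [h, zero_mul]
      · rw [h, zero_rpow (one_div_ne_zero hσ), mul_zero]
    rw [Finset.sum_eq_zero fun x _ => hzero' x, zero_rpow hσ,
      Finset.sum_eq_zero fun x _ => hzero x, mul_zero]

lemma fRho_div_of_singular [Fintype Y] (hsing : Singular W Q) (hW : ∀ x y, 0 ≤ W x y)
    (hQ : ∀ x, 0 ≤ Q x) {ρ : ℝ} (hρ : 1 + ρ ≠ 0) {x : X} {y : Y} (h : 0 < Q x * W x y) :
    fRho W Q ρ y / W x y = supportMass W Q y ^ (ρ + 1)
      / ∑ b, (∑ a, Q a * W a b ^ (1 / (1 + ρ))) ^ (1 + ρ) := by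
  have hWx : W x y ≠ 0 := (pos_of_mul_pos_right h (hQ x)).ne'
  rw [fRho, gallager_term_of_singular hsing hW hQ hρ, sum_mul_of_singular hsing hW hQ h,
    rpow_add_one' (supportMass_nonneg hQ y) (by rwa [add_comm])]
  field_simp

lemma supportMass_eq_of_llr_eq [Fintype Y] (hsing : Singular W Q) (hW : ∀ x y, 0 ≤ W x y)
    (hQ : ∀ x, 0 ≤ Q x) {ρ : ℝ} (hρ : 1 + ρ ≠ 0) {x₀ x : X} {y₀ y : Y}
    (h₀ : 0 < Q x₀ * W x₀ y₀) (h : 0 < Q x * W x y)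
    (hllr : log (fRho W Q ρ y / W x y) = log (fRho W Q ρ y₀ / W x₀ y₀)) :
    supportMass W Q y = supportMass W Q y₀ := by
  have hD := gallager_sum_pos hW hQ h₀ ρ
  rw [fRho_div_of_singular hsing hW hQ hρ h, fRho_div_of_singular hsing hW hQ hρ h₀] at hllr
  have hpos : ∀ {x y}, 0 < Q x * W x y → 0 < supportMass W Q y ^ (ρ + 1) / _ :=
    fun h => div_pos (rpow_pos_of_pos (supportMass_pos hQ h) _) hD
  have hρ' : ρ + 1 ≠ 0 := by rwa [add_comm]
  rw [← rpow_left_inj (supportMass_nonneg hQ y) (supportMass_nonneg hQ y₀) hρ',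
    ← div_left_inj' hD.ne']
  exact log_injOn_pos (hpos h) (hpos h₀) hllr

lemma Eo_eq_of_supportMass_eq [Fintype Y] (hsing : Singular W Q) (hW : IsChannel W)
    (hQ : IsDist Q) {q : ℝ} (hq : 0 < q)
    (hmass : ∀ x y, 0 < Q x * W x y → supportMass W Q y = q)
    {σ : ℝ} (hσ : 1 + σ ≠ 0) : Eo W σ Q = -σ * log q := by
  have hterm : ∀ y, supportMass W Q y ^ σ * ∑ x, Q x * W x y = q ^ σ * ∑ x, Q x * W x y := by
    intro y
    by_cases hy : ∃ x, 0 < Q x * W x y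
    · obtain ⟨x, hx⟩ := hy
      rw [hmass x y hx]
    · push Not at hy
      rw [Finset.sum_eq_zero fun x _ => (hy x).antisymm (mul_nonneg (hQ.1 x) (hW.1 x y)),
        mul_zero, mul_zero]
  simp_rw [Eo, gallager_term_of_singular hsing hW.1 hQ.1 hσ, hterm, ← Finset.mul_sum]
  rw [Finset.sum_comm, sum_sum_mul_eq_one hW hQ, mul_one, log_rpow hq]
  ring

lemma RcrQ_eq_of_supportMass_eq [Fintype Y] (hsing : Singular W Q) (hW : IsChannel W)
    (hQ : IsDist Q) {q : ℝ} (hq : 0 < q)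
    (hmass : ∀ x y, 0 < Q x * W x y → supportMass W Q y = q) :
    RcrQ W Q = -log q := by
  have hEo : (fun σ => Eo W σ Q) =ᶠ[nhds 1] fun σ => -σ * log q := by
    filter_upwards [Ioi_mem_nhds (by norm_num : (-1 : ℝ) < 1)] with σ hσ
    exact Eo_eq_of_supportMass_eq hsing hW hQ hq hmass (by rw [Set.mem_Ioi] at hσ; linarith)
  rw [RcrQ, hEo.deriv_eq]
  simp

lemma MI_eq_of_supportMass_eq [Fintype Y] (hsing : Singular W Q) (hW : IsChannel W)
    (hQ : IsDist Q) {q : ℝ} (hmass : ∀ x y, 0 < Q x * W x y → supportMass W Q y = q) :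
    MI W Q = -log q := by
  have hterm : ∀ x y,
      Q x * W x y * log (W x y / ∑ x', Q x' * W x' y) = Q x * W x y * -log q := by
    intro x y
    rcases (mul_nonneg (hQ.1 x) (hW.1 x y)).eq_or_lt with h | h
    · rw [← h, zero_mul, zero_mul]
    · have hWx : W x y ≠ 0 := (pos_of_mul_pos_right h (hQ.1 x)).ne'
      rw [sum_mul_of_singular hsing hW.1 hQ.1 h, hmass x y h, div_mul_cancel_right₀ hWx, log_inv]
  simp_rw [MI, hterm, ← Finset.sum_mul, sum_sum_mul_eq_one hW hQ, one_mul]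

end Channel

theorem statement16_general {X Y : Type*} [Fintype X] [Fintype Y]
    (W : X → Y → ℝ) (hW : IsChannel W)
    (Q : X → ℝ) (hQ : IsDist Q) (hsing : Singular W Q)
    (R : ℝ) (hR1 : RcrQ W Q < R) (hR2 : R < MI W Q)
    (ρs : ℝ) (hρs : ρs = - deriv (fun a => ErQ W a Q) R) :
    ∀ t : ℝ, 0 < deriv (deriv (fun s => Lam W Q ρs s)) t := by
  obtain ⟨x₀, y₀, h₀⟩ := exists_pos_joint hW hQ
  have hρ : 1 + ρs ≠ 0 := by
    have : 0 ≤ ρs := hρs ▸ neg_nonneg.2 (antitone_ErQ_s16 hW.1 hQ.1 h₀).deriv_nonpos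
    exact (by linarith : 0 < 1 + ρs).ne'
  obtain ⟨x₁, y₁, h₁, hne⟩ : ∃ x y, 0 < Q x * W x y ∧
      log (fRho W Q ρs y / W x y) ≠ log (fRho W Q ρs y₀ / W x₀ y₀) := by
    by_contra! hllr
    have hmass : ∀ x y, 0 < Q x * W x y → supportMass W Q y = supportMass W Q y₀ :=
      fun x y h => supportMass_eq_of_llr_eq hsing hW.1 hQ.1 hρ h₀ h (hllr x y h)
    have hq := supportMass_pos hQ.1 h₀
    rw [RcrQ_eq_of_supportMass_eq hsing hW hQ hq hmass] at hR1
    rw [MI_eq_of_supportMass_eq hsing hW hQ hmass] at hR2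
    exact hR1.not_gt hR2
  intro t
  have := deriv_deriv_log_sum_exp_pos (c := fun i : X × Y => Q i.1 * W i.1 i.2)
    (z := fun i => log (fRho W Q ρs i.2 / W i.1 i.2))
    (fun i => mul_nonneg (hQ.1 i.1) (hW.1 i.1 i.2)) (p := (x₁, y₁)) (q := (x₀, y₀)) h₁ h₀ hne t
  simp only [Fintype.sum_prod_type] at this
  exact this

/-- Singular case: the cumulant generating function `Λ = Λ_{ρ*}` satisfies
`Λ''(λ) > 0` for all `λ ∈ ℝ`. -/
theorem statement16 {X Y : Type*} [Fintype X] [Fintype Y] [Nonempty X] [Nonempty Y]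
    (W : X → Y → ℝ) (hW : IsChannel W) (hcr : Rcr W < Capacity W)
    (Q : X → ℝ) (hQ : IsDist Q) (hsing : Singular W Q)
    (R : ℝ) (hR1 : RcrQ W Q < R) (hR2 : R < MI W Q)
    (ρs : ℝ) (hρs : ρs = - deriv (fun a => ErQ W a Q) R) :
    ∀ t : ℝ, 0 < deriv (deriv (fun s => Lam W Q ρs s)) t :=
  statement16_general W hW Q hQ hsing R hR1 hR2 ρs hρs

end RCB
end
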